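/- arXiv:2212.09918 — 2 statements merged into one kernel-verified Lean document; each statement's English description precedes it below -/
import Mathlib

section
/- Let α be a countable type, n a natural number, and let f : (Fin n → α) → ℝ be permutation invariant, i.e., f (x ∘ σ) = f x for every permutation σ of Fin n. Then there exist functions Ψ : α → ℝ and Φ : ℝ → ℝ such that for every x : Fin n → α, f x = Φ (∑ i, Ψ (x i)). -/
open Multiset in
private lemma deep_sets_pow_sum_inj (b : ℕ) (hb : 1 < b) :
    ∀ N : ℕ, ∀ s t : Multiset ℕ, s.card < b → t.card < b →
      (s.map (b ^ ·)).sum = N → (t.map (b ^ ·)).sum = N → s = t := by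
  have decomp : ∀ s : Multiset ℕ, s.card < b →
      s.count 0 = (s.map (b ^ ·)).sum % b ∧
      ((((s.filter (· ≠ 0)).map (· - 1)).map (b ^ ·)).sum = (s.map (b ^ ·)).sum / b) ∧
      s = Multiset.replicate ((s.map (b ^ ·)).sum % b) 0
          + ((s.filter (· ≠ 0)).map (· - 1)).map (· + 1) := by
    intro s hcard
    set s₁ := s.filter (· ≠ 0) with hs₁
    have hsplit : s.filter (· = 0) + s₁ = s := Multiset.filter_add_not _ s
    have hzeros : s.filter (· = 0) = Multiset.replicate (s.count 0) 0 :=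
      Multiset.filter_eq' s 0
    have hmap : s₁.map (b ^ ·) = s₁.map (fun k => b * b ^ (k - 1)) := by
      apply Multiset.map_congr rfl
      intro k hk
      have hk0 : k ≠ 0 := (Multiset.mem_filter.mp (show k ∈ Multiset.filter (fun x => x ≠ 0) s from hs₁ ▸ hk)).2
      have : b ^ k = b ^ (k - 1 + 1) := by congr 1; omega
      rw [this, pow_succ, mul_comm]
    have hsum1 : (s₁.map (b ^ ·)).sum = b * (((s₁.map (· - 1)).map (b ^ ·))).sum := by
      rw [hmap, Multiset.map_map]
      exact Multiset.sum_map_mul_left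
    have hN : (s.map (b ^ ·)).sum = s.count 0 + b * (((s₁.map (· - 1)).map (b ^ ·))).sum := by
      conv_lhs => rw [← hsplit]
      rw [Multiset.map_add, Multiset.sum_add, hzeros, hsum1]
      simp
    have hc : s.count 0 < b := lt_of_le_of_lt (Multiset.count_le_card 0 s) hcard
    have hmod : (s.map (b ^ ·)).sum % b = s.count 0 := by
      rw [hN, Nat.add_mul_mod_self_left, Nat.mod_eq_of_lt hc]
    have hdiv : (s.map (b ^ ·)).sum / b = (((s₁.map (· - 1)).map (b ^ ·))).sum := by
      rw [hN, Nat.add_mul_div_left _ _ (by omega), Nat.div_eq_of_lt hc, zero_add]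
    refine ⟨hmod.symm, hdiv.symm, ?_⟩
    have hrec : (s₁.map (· - 1)).map (· + 1) = s₁ := by
      rw [Multiset.map_map]
      refine Eq.trans (Multiset.map_congr rfl ?_) (Multiset.map_id s₁)
      intro k hk
      have hk0 : k ≠ 0 := (Multiset.mem_filter.mp (show k ∈ Multiset.filter (fun x => x ≠ 0) s from hs₁ ▸ hk)).2
      simp only [Function.comp_apply, id_eq]
      omega
    rw [hmod, hrec, ← hzeros]
    exact hsplit.symm
  intro N
  induction N using Nat.strong_induction_on with
  | _ N ih =>
    intro s t hs ht hsum hsum'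
    rcases Nat.eq_zero_or_pos N with hN | hN
    · subst hN
      have hs0 : s = 0 := by
        by_contra h
        obtain ⟨a, ha⟩ := Multiset.exists_mem_of_ne_zero h
        have : b ^ a ≤ (s.map (b ^ ·)).sum :=
          Multiset.single_le_sum (fun x _ => Nat.zero_le x) _ (Multiset.mem_map_of_mem _ ha)
        have := pow_pos (by omega : 0 < b) a
        omega
      have ht0 : t = 0 := by
        by_contra h
        obtain ⟨a, ha⟩ := Multiset.exists_mem_of_ne_zero h
        have : b ^ a ≤ (t.map (b ^ ·)).sum :=
          Multiset.single_le_sum (fun x _ => Nat.zero_le x) _ (Multiset.mem_map_of_mem _ ha)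
        have := pow_pos (by omega : 0 < b) a
        omega
      rw [hs0, ht0]
    · obtain ⟨hc1, hd1, he1⟩ := decomp s hs
      obtain ⟨hc2, hd2, he2⟩ := decomp t ht
      rw [hsum] at hc1 hd1 he1
      rw [hsum'] at hc2 hd2 he2
      have hlt : N / b < N := Nat.div_lt_self hN hb
      have hcards : ((s.filter (· ≠ 0)).map (· - 1)).card < b := by
        rw [Multiset.card_map]
        exact lt_of_le_of_lt (Multiset.card_le_card (Multiset.filter_le _ s)) hs
      have hcardt : ((t.filter (· ≠ 0)).map (· - 1)).card < b := by
        rw [Multiset.card_map]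
        exact lt_of_le_of_lt (Multiset.card_le_card (Multiset.filter_le _ t)) ht
      have := ih (N / b) hlt _ _ hcards hcardt hd1 hd2
      rw [he1, he2, this]

theorem deep_sets_necessity
    {α : Type*} [Countable α] (n : ℕ) (f : (Fin n → α) → ℝ)
    (hf : ∀ (σ : Equiv.Perm (Fin n)) (x : Fin n → α), f (x ∘ σ) = f x) :
    ∃ (Ψ : α → ℝ) (Φ : ℝ → ℝ), ∀ x : Fin n → α, f x = Φ (∑ i, Ψ (x i)) := by
  obtain ⟨e⟩ := nonempty_embedding_nat α
  set b := n + 2 with hb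
  set Ψ : α → ℝ := fun a => ((b ^ (e a) : ℕ) : ℝ) with hΨ
  -- key: equal sums imply f equal
  have key : ∀ x y : Fin n → α, (∑ i, Ψ (x i)) = (∑ i, Ψ (y i)) → f x = f y := by
    intro x y hxy
    have hnat : (∑ i, b ^ (e (x i))) = (∑ i, b ^ (e (y i))) := by
      have h2 : ((∑ i, b ^ (e (x i)) : ℕ) : ℝ) = ((∑ i, b ^ (e (y i)) : ℕ) : ℝ) := by
        rw [Nat.cast_sum, Nat.cast_sum]
        exact hxy
      exact_mod_cast h2
    -- multisets of encoded values
    have hms : Multiset.map (fun i => e (x i)) Finset.univ.val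
        = Multiset.map (fun i => e (y i)) Finset.univ.val := by
      apply deep_sets_pow_sum_inj b (show 1 < b by omega) (∑ i, b ^ (e (x i)))
      · rw [Multiset.card_map]; simp [hb]
      · rw [Multiset.card_map]; simp [hb]
      · rw [Multiset.map_map]; rfl
      · rw [Multiset.map_map]
        exact hnat.symm
    -- hence multisets of the x i and y i are equal
    have hms' : Multiset.map x Finset.univ.val = Multiset.map y Finset.univ.val := by
      apply Multiset.map_injective e.injective
      rw [Multiset.map_map, Multiset.map_map]
      exact hms
    -- convert to list perm on ofFn
    have hperm : (List.ofFn (fun i => e (x i))).Perm (List.ofFn (fun i => e (y i))) := by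
      rw [← Multiset.coe_eq_coe]
      have h1 : (↑(List.ofFn (fun i => e (x i))) : Multiset ℕ)
          = Multiset.map (fun i => e (x i)) Finset.univ.val := by
        rw [List.ofFn_eq_map]; rfl
      have h2 : (↑(List.ofFn (fun i => e (y i))) : Multiset ℕ)
          = Multiset.map (fun i => e (y i)) Finset.univ.val := by
        rw [List.ofFn_eq_map]; rfl
      rw [h1, h2, hms]
    -- sort both sides
    set g : Fin n → ℕ := fun i => e (x i) with hg
    set h : Fin n → ℕ := fun i => e (y i) with hh
    have hsorted : g ∘ Tuple.sort g = h ∘ Tuple.sort h := by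
      apply List.ofFn_injective
      exact List.Perm.eq_of_sortedLE
        (Tuple.monotone_sort g).sortedLE_ofFn
        (Tuple.monotone_sort h).sortedLE_ofFn
        (((Tuple.sort g).ofFn_comp_perm g).trans
          (hperm.trans (((Tuple.sort h).ofFn_comp_perm h).symm)))
    set σ : Equiv.Perm (Fin n) := (Tuple.sort h).trans ((Tuple.sort g).symm) with hσ
    -- h = g ∘ σ ... careful with directions; derive y = x ∘ τ for some τ
    have hyx : ∀ i, e (y i) = e (x ((Tuple.sort g) ((Tuple.sort h).symm i))) := by
      intro i
      have := congrFun hsorted ((Tuple.sort h).symm i)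
      simp only [Function.comp_apply, Equiv.apply_symm_apply] at this
      exact this.symm
    have hyx' : y = x ∘ (((Tuple.sort h).symm).trans (Tuple.sort g)) := by
      funext i
      exact e.injective (hyx i)
    rw [hyx', hf]
  classical
  refine ⟨Ψ, fun s => if hs : ∃ x : Fin n → α, (∑ i, Ψ (x i)) = s then f hs.choose else 0, ?_⟩
  intro x
  have hx : ∃ y : Fin n → α, (∑ i, Ψ (y i)) = ∑ i, Ψ (x i) := ⟨x, rfl⟩
  show f x = if hs : ∃ y : Fin n → α, (∑ i, Ψ (y i)) = ∑ i, Ψ (x i) then f hs.choose else 0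
  rw [dif_pos hx]
  exact (key _ _ hx.choose_spec).symm
end

section
/- Fix a natural number n ≥ 1 and define Ψ : ℕ → ℝ by Ψ k = (n + 1 : ℝ)^(-(k : ℤ)). Then the map sending a multiset M of natural numbers with card M = n to the real number ∑_{k ∈ M} Ψ k is injective: if M₁ and M₂ are multisets over ℕ with card M₁ = card M₂ = n and (M₁.map Ψ).sum = (M₂.map Ψ).sum, then M₁ = M₂. -/
theorem multiset_encoding_injective
    (n : ℕ) (hn : 1 ≤ n) (Ψ : ℕ → ℝ) (hΨ : ∀ k : ℕ, Ψ k = ((n : ℝ) + 1) ^ (-(k : ℤ)))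
    (M₁ M₂ : Multiset ℕ) (h₁ : Multiset.card M₁ = n) (h₂ : Multiset.card M₂ = n)
    (hsum : (M₁.map Ψ).sum = (M₂.map Ψ).sum) :
    M₁ = M₂ := by
  have hb1 : (1:ℝ) < (n:ℝ) + 1 := by
    have : (1:ℝ) ≤ (n:ℝ) := by exact_mod_cast hn
    linarith
  have hb0 : (0:ℝ) < (n:ℝ) + 1 := by linarith
  have hΨpos : ∀ k, 0 < Ψ k := by
    intro k; rw [hΨ]; exact zpow_pos hb0 _
  have hΨmono : ∀ k l : ℕ, k ≤ l → Ψ l ≤ Ψ k := by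
    intro k l hkl
    rw [hΨ, hΨ]
    apply zpow_le_zpow_right₀ hb1.le
    omega
  have hgap : ∀ k l : ℕ, k < l → ((n:ℝ) + 1) * Ψ l ≤ Ψ k := by
    intro k l hkl
    rw [hΨ, hΨ]
    have : ((n:ℝ) + 1) * ((n:ℝ)+1) ^ (-(l:ℤ)) = ((n:ℝ)+1) ^ (1 + -(l:ℤ)) := by
      rw [zpow_add₀ (ne_of_gt hb0), zpow_one]
    rw [this]
    apply zpow_le_zpow_right₀ hb1.le
    omega
  -- if a is min of A with card A ≤ n, b is min of B, sums equal, then ¬ b < a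
  have half : ∀ A B : Multiset ℕ, Multiset.card A ≤ n →
      (A.map Ψ).sum = (B.map Ψ).sum → ∀ a b : ℕ,
      (∀ x ∈ A, a ≤ x) → b ∈ B → ¬ b < a := by
    intro A B hcard hs a b hamin hbB hba
    have hAle : (A.map Ψ).sum ≤ (Multiset.card A) • Ψ a := by
      have := Multiset.sum_le_card_nsmul (A.map Ψ) (Ψ a) ?_
      · simpa using this
      intro x hx
      obtain ⟨y, hy, rfl⟩ := Multiset.mem_map.mp hx
      exact hΨmono a y (hamin y hy)
    have hBge : Ψ b ≤ (B.map Ψ).sum := by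
      apply Multiset.single_le_sum
      · intro x hx
        obtain ⟨y, _, rfl⟩ := Multiset.mem_map.mp hx
        exact (hΨpos y).le
      · exact Multiset.mem_map_of_mem Ψ hbB
    have h1 : ((Multiset.card A : ℝ)) * Ψ a ≤ (n:ℝ) * Ψ a := by
      have : (Multiset.card A : ℝ) ≤ (n:ℝ) := by exact_mod_cast hcard
      exact mul_le_mul_of_nonneg_right this (hΨpos a).le
    have h2 : ((n:ℝ) + 1) * Ψ a ≤ Ψ b := hgap b a hba
    have hpa := hΨpos a
    have : (Multiset.card A) • Ψ a = ((Multiset.card A : ℝ)) * Ψ a := by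
      simp [nsmul_eq_mul]
    rw [this] at hAle
    nlinarith [hΨpos b]
  have key : ∀ c : ℕ, c ≤ n → ∀ A B : Multiset ℕ, Multiset.card A = c →
      Multiset.card B = c → (A.map Ψ).sum = (B.map Ψ).sum → A = B := by
    intro c
    induction c with
    | zero =>
      intro _ A B hA hB _
      rw [Multiset.card_eq_zero] at hA hB
      rw [hA, hB]
    | succ c ih =>
      intro hcn A B hA hB hs
      have hA0 : A ≠ 0 := by
        intro h; rw [h] at hA; simp at hA
      have hB0 : B ≠ 0 := by
        intro h; rw [h] at hB; simp at hB
      have hAne : A.toFinset.Nonempty := by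
        rw [Multiset.toFinset_nonempty]; exact hA0
      have hBne : B.toFinset.Nonempty := by
        rw [Multiset.toFinset_nonempty]; exact hB0
      set a := A.toFinset.min' hAne with ha_def
      set b := B.toFinset.min' hBne with hb_def
      have haA : a ∈ A := Multiset.mem_toFinset.mp (A.toFinset.min'_mem hAne)
      have hbB : b ∈ B := Multiset.mem_toFinset.mp (B.toFinset.min'_mem hBne)
      have hamin : ∀ x ∈ A, a ≤ x := fun x hx =>
        A.toFinset.min'_le x (Multiset.mem_toFinset.mpr hx)
      have hbmin : ∀ x ∈ B, b ≤ x := fun x hx =>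
        B.toFinset.min'_le x (Multiset.mem_toFinset.mpr hx)
      clear_value a b
      have hab : a = b := by
        have h1 : ¬ b < a := half A B (by omega) hs a b hamin hbB
        have h2 : ¬ a < b := half B A (by omega) hs.symm b a hbmin haA
        omega
      subst hab
      have hAe : a ::ₘ A.erase a = A := Multiset.cons_erase haA
      have hBe : a ::ₘ B.erase a = B := Multiset.cons_erase hbB
      have hsum' : ((A.erase a).map Ψ).sum = ((B.erase a).map Ψ).sum := by
        have e1 : (A.map Ψ).sum = Ψ a + ((A.erase a).map Ψ).sum := by
          rw [← hAe]; simp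
        have e2 : (B.map Ψ).sum = Ψ a + ((B.erase a).map Ψ).sum := by
          rw [← hBe]; simp
        rw [e1, e2] at hs
        linarith
      have hcA : Multiset.card (A.erase a) = c := by
        rw [Multiset.card_erase_of_mem haA, hA]; rfl
      have hcB : Multiset.card (B.erase a) = c := by
        rw [Multiset.card_erase_of_mem hbB, hB]; rfl
      have := ih (by omega) (A.erase a) (B.erase a) hcA hcB hsum'
      rw [← hAe, ← hBe, this]
  exact key n le_rfl M₁ M₂ h₁ h₂ hsum
end
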